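/- arXiv:2102.13237 — 8 statements merged into one kernel-verified Lean document; each statement's English description precedes it below -/
import Mathlib

section
/- For 0 < r < 1, the polynomial P_r(x) = a x⁴ + b x² + c with a = -1/(2r(r+1)²), b = (3r²+2r+1)/(2r(r+1)²), c = r²(2r+1)/(2r(r+1)²) satisfies P_r(x) ≥ x for all x in [0, 1]. -/
theorem stmt_3 (r : ℝ) (hr : 0 < r) (hr1 : r < 1)
    (a b c : ℝ)
    (ha : a = -1 / (2 * r * (r + 1) ^ 2))
    (hb : b = (3 * r ^ 2 + 2 * r + 1) / (2 * r * (r + 1) ^ 2))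
    (hc : c = r ^ 2 * (2 * r + 1) / (2 * r * (r + 1) ^ 2)) :
    ∀ x ∈ Set.Icc (0 : ℝ) 1, x ≤ a * x ^ 4 + b * x ^ 2 + c := by
  rintro x ⟨hx0, hx1⟩
  have hD : 0 < 2 * r * (r + 1) ^ 2 := by positivity
  rw [ha, hb, hc, ← sub_nonneg]
  have key : 0 ≤ (x - r) ^ 2 * ((1 - x) * (x + 2 * r + 1)) :=
    mul_nonneg (sq_nonneg _) (mul_nonneg (by linarith) (by linarith))
  have h : (-1 / (2 * r * (r + 1) ^ 2) * x ^ 4 +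
      (3 * r ^ 2 + 2 * r + 1) / (2 * r * (r + 1) ^ 2) * x ^ 2 +
      r ^ 2 * (2 * r + 1) / (2 * r * (r + 1) ^ 2) - x)
      = (x - r) ^ 2 * ((1 - x) * (x + 2 * r + 1)) / (2 * r * (r + 1) ^ 2) := by
    field_simp
    ring
  rw [h]
  exact div_nonneg key hD.le
end

section
/- For 0 < r < 1, the polynomial P_r(x) = a x⁴ + b x² + c with a = -1/(2r(r+1)²), b = (3r²+2r+1)/(2r(r+1)²), c = r²(2r+1)/(2r(r+1)²) satisfies P_r(x) ≥ |x| for all x in [-1, 1]. -/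
theorem stmt_4 (r : ℝ) (hr : 0 < r) (hr1 : r < 1)
    (a b c : ℝ)
    (ha : a = -1 / (2 * r * (r + 1) ^ 2))
    (hb : b = (3 * r ^ 2 + 2 * r + 1) / (2 * r * (r + 1) ^ 2))
    (hc : c = r ^ 2 * (2 * r + 1) / (2 * r * (r + 1) ^ 2)) :
    ∀ x ∈ Set.Icc (-1 : ℝ) 1, |x| ≤ a * x ^ 4 + b * x ^ 2 + c := by
  intro x hx
  have hd : (0:ℝ) < 2 * r * (r + 1) ^ 2 := by positivity
  have h2 : x ^ 2 = |x| ^ 2 := (sq_abs x).symm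
  have h4 : x ^ 4 = |x| ^ 4 := by
    rw [show (4:ℕ) = 2 * 2 from rfl, pow_mul, pow_mul, sq_abs]
  set t := |x| with ht
  have ht0 : 0 ≤ t := abs_nonneg x
  have ht1 : t ≤ 1 := abs_le.mpr ⟨hx.1, hx.2⟩
  rw [h2, h4, ← sub_nonneg]
  have key : a * t ^ 4 + b * t ^ 2 + c - t
      = (t - r) ^ 2 * (1 - t) * (t + 2 * r + 1) / (2 * r * (r + 1) ^ 2) := by
    rw [ha, hb, hc]
    field_simp
    ring
  rw [key]
  apply div_nonneg _ hd.le
  have h1t : 0 ≤ 1 - t := by linarith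
  positivity
end

section
/- For 0 < r < 1, the quartic P_r(x) = a x⁴ + b x² + c with a = -1/(2r(r+1)²), b = (3r²+2r+1)/(2r(r+1)²), c = r²(2r+1)/(2r(r+1)²) satisfies: P_r(x) = x for x ∈ [0,1] if and only if x = r or x = 1. -/
/-! Clearing the denominator `2r(r+1)²`, the equation `P_r(x) = x` becomes
`(x - 1)(x - r)²(x + 2r + 1) = 0`, and the last factor is positive for `x ≥ 0`. -/

lemma quartic_eq_self_iff_factor_eq_zero {r x : ℝ} (hD : 2 * r * (r + 1) ^ 2 ≠ 0) :
    -1 / (2 * r * (r + 1) ^ 2) * x ^ 4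
        + (3 * r ^ 2 + 2 * r + 1) / (2 * r * (r + 1) ^ 2) * x ^ 2
        + r ^ 2 * (2 * r + 1) / (2 * r * (r + 1) ^ 2) = x ↔
      (x - 1) * (x - r) ^ 2 * (x + 2 * r + 1) = 0 := by
  have factorization : 2 * r * (r + 1) ^ 2 * (-1 / (2 * r * (r + 1) ^ 2) * x ^ 4
        + (3 * r ^ 2 + 2 * r + 1) / (2 * r * (r + 1) ^ 2) * x ^ 2
        + r ^ 2 * (2 * r + 1) / (2 * r * (r + 1) ^ 2) - x) =
      -((x - 1) * (x - r) ^ 2 * (x + 2 * r + 1)) := by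
    rw [div_eq_mul_inv, div_eq_mul_inv, div_eq_mul_inv]
    linear_combination (-x ^ 4 + (3 * r ^ 2 + 2 * r + 1) * x ^ 2 + r ^ 2 * (2 * r + 1))
      * mul_inv_cancel₀ hD
  rw [← sub_eq_zero, ← mul_eq_zero_iff_left hD, factorization, neg_eq_zero]

lemma factor_eq_zero_iff {r x : ℝ} (hr : 0 < r) (hx : 0 ≤ x) :
    (x - 1) * (x - r) ^ 2 * (x + 2 * r + 1) = 0 ↔ x = r ∨ x = 1 := by
  have hpos : x + 2 * r + 1 ≠ 0 := by positivity
  simp only [mul_eq_zero, hpos, or_false, pow_eq_zero_iff two_ne_zero, sub_eq_zero]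
  exact or_comm

theorem stmt_5_general (r : ℝ) (hr : 0 < r)
    (a b c : ℝ)
    (ha : a = -1 / (2 * r * (r + 1) ^ 2))
    (hb : b = (3 * r ^ 2 + 2 * r + 1) / (2 * r * (r + 1) ^ 2))
    (hc : c = r ^ 2 * (2 * r + 1) / (2 * r * (r + 1) ^ 2)) :
    ∀ x ∈ Set.Icc (0 : ℝ) 1,
      (a * x ^ 4 + b * x ^ 2 + c = x ↔ x = r ∨ x = 1) := by
  rintro x ⟨hx, -⟩
  subst ha hb hc
  rw [quartic_eq_self_iff_factor_eq_zero (by positivity), factor_eq_zero_iff hr hx]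

theorem stmt_5 (r : ℝ) (hr : 0 < r) (hr1 : r < 1)
    (a b c : ℝ)
    (ha : a = -1 / (2 * r * (r + 1) ^ 2))
    (hb : b = (3 * r ^ 2 + 2 * r + 1) / (2 * r * (r + 1) ^ 2))
    (hc : c = r ^ 2 * (2 * r + 1) / (2 * r * (r + 1) ^ 2)) :
    ∀ x ∈ Set.Icc (0 : ℝ) 1,
      (a * x ^ 4 + b * x ^ 2 + c = x ↔ x = r ∨ x = 1) :=
  stmt_5_general r hr a b c ha hb hc
end

section
/- Let G be a simple graph with maximum degree Δ ≥ 1, adjacency eigenvalues λ₁,…,λₙ, m edges, Zagreb index Z = ∑ᵢ dᵢ², and Q four-cycles. For any 0 < r < 1, the energy E(G) = ∑ᵢ|λᵢ| satisfies E(G) ≤ (−1/(2r(r+1)²))·(2Z−2m+8Q)/Δ³ + ((3r²+2r+1)/(2r(r+1)²))·(2m)/Δ + Δn·r²(2r+1)/(2r(r+1)²). -/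
/-!
Each eigenvalue `λ` of the adjacency matrix satisfies `|λ| ≤ Δ`, and on `[0, Δ]` the function
`t ↦ t` lies below the even quartic `q(t) = (-t⁴/Δ³ + (3r² + 2r + 1) t²/Δ + r²(2r + 1) Δ) / (2r(r + 1)²)`,
because `2r(r+1)²Δ³ (q(t) - t) = (t - rΔ)² (Δ - t) (t + (2r + 1)Δ)`.
Summing `|λᵢ| ≤ q(λᵢ)` over the spectrum and using `∑ λᵢ² = tr A² = 2m`,
`∑ λᵢ⁴ = tr A⁴` gives the bound.
-/

open Finset Matrix

namespace Matrix.IsHermitian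

variable {ι 𝕜 : Type*} [Fintype ι] [DecidableEq ι] [RCLike 𝕜] {A : Matrix ι ι 𝕜}

theorem trace_pow_eq_sum_eigenvalues_pow (hA : A.IsHermitian) (k : ℕ) :
    (A ^ k).trace = ∑ i, (hA.eigenvalues i : 𝕜) ^ k := by
  conv_lhs => rw [hA.spectral_theorem, ← map_pow, Unitary.conjStarAlgAut_apply, trace_mul_cycle,
    Unitary.coe_star_mul_self, Matrix.one_mul, diagonal_pow, trace_diagonal]
  simp

end Matrix.IsHermitian

namespace SimpleGraph

variable {V : Type*} [Fintype V] [DecidableEq V] (G : SimpleGraph V) [DecidableRel G.Adj]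

theorem trace_adjMatrix_sq : ((G.adjMatrix ℝ) ^ 2).trace = 2 * #G.edgeFinset := by
  simp only [sq, trace, Matrix.diag, adjMatrix_mul_self_apply_self]
  exact_mod_cast G.sum_degrees_eq_twice_card_edges

theorem abs_le_maxDegree_of_hasEigenvalue {μ : ℝ}
    (hμ : Module.End.HasEigenvalue (toLin' (G.adjMatrix ℝ)) μ) : |μ| ≤ G.maxDegree := by
  obtain ⟨k, hk⟩ := eigenvalue_mem_ball hμ
  rw [Metric.mem_closedBall, adjMatrix_apply, if_neg (G.irrefl), Real.dist_eq, sub_zero] at hk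
  have hrow : ∑ j ∈ univ.erase k, ‖G.adjMatrix ℝ k j‖ = G.degree k := by
    rw [sum_erase _ (by simp)]
    simp [adjMatrix_apply, apply_ite (‖·‖), ← card_neighborFinset_eq_degree,
      neighborFinset_eq_filter]
  exact hk.trans (hrow.trans_le (by exact_mod_cast G.degree_le_maxDegree k))

theorem abs_eigenvalues_adjMatrix_le_maxDegree (hA : (G.adjMatrix ℝ).IsHermitian) (i : V) :
    |hA.eigenvalues i| ≤ G.maxDegree := by
  refine G.abs_le_maxDegree_of_hasEigenvalue ?_
  rw [Module.End.hasEigenvalue_iff_mem_spectrum, spectrum_toLin']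
  exact hA.eigenvalues_mem_spectrum_real i

end SimpleGraph

theorem quartic_energy_poly_le {Δ a r : ℝ} (ha : 0 ≤ a) (haΔ : a ≤ Δ) (hr : 0 ≤ r) :
    2 * r * (r + 1) ^ 2 * Δ ^ 3 * a ≤
      -a ^ 4 + (3 * r ^ 2 + 2 * r + 1) * Δ ^ 2 * a ^ 2 + r ^ 2 * (2 * r + 1) * Δ ^ 4 := by
  have key : 0 ≤ (a - r * Δ) ^ 2 * (Δ - a) * (a + (2 * r + 1) * Δ) := by
    have : 0 ≤ Δ := ha.trans haΔ
    have : 0 ≤ Δ - a := sub_nonneg.2 haΔ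
    positivity
  linear_combination key

theorem abs_le_quartic_energy_bound {Δ x r : ℝ} (hx : |x| ≤ Δ) (hr : 0 < r) :
    |x| ≤ (-1 / (2 * r * (r + 1) ^ 2)) * (x ^ 4 / Δ ^ 3)
      + ((3 * r ^ 2 + 2 * r + 1) / (2 * r * (r + 1) ^ 2)) * (x ^ 2 / Δ)
      + Δ * (r ^ 2 * (2 * r + 1) / (2 * r * (r + 1) ^ 2)) := by
  -- at `Δ = 0` the right-hand side is `0` because `y / 0 = 0`
  rcases (abs_nonneg x |>.trans hx).eq_or_lt with rfl | hΔ
  · simp [abs_nonpos_iff.1 hx]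
  have hpoly := quartic_energy_poly_le (abs_nonneg x) hx hr.le
  rw [(by decide : Even 4).pow_abs, sq_abs] at hpoly
  have hrhs : (-1 / (2 * r * (r + 1) ^ 2)) * (x ^ 4 / Δ ^ 3)
      + ((3 * r ^ 2 + 2 * r + 1) / (2 * r * (r + 1) ^ 2)) * (x ^ 2 / Δ)
      + Δ * (r ^ 2 * (2 * r + 1) / (2 * r * (r + 1) ^ 2))
      = (-x ^ 4 + (3 * r ^ 2 + 2 * r + 1) * Δ ^ 2 * x ^ 2 + r ^ 2 * (2 * r + 1) * Δ ^ 4)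
        / (2 * r * (r + 1) ^ 2 * Δ ^ 3) := by
    field_simp
  rwa [hrhs, le_div_iff₀ (by positivity), mul_comm]

theorem stmt_13_general (n : ℕ) (G : SimpleGraph (Fin n)) [DecidableRel G.Adj]
    (hA : (G.adjMatrix ℝ).IsHermitian)
    (m Z Q : ℝ)
    (hm : m = (G.edgeFinset.card : ℝ))
    (hQ : ((G.adjMatrix ℝ) ^ 4).trace = 2 * Z - 2 * m + 8 * Q)
    (r : ℝ) (hr : 0 < r) :
    ∑ i, |hA.eigenvalues i| ≤
      (-1 / (2 * r * (r + 1) ^ 2)) * ((2 * Z - 2 * m + 8 * Q) / (G.maxDegree : ℝ) ^ 3)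
      + ((3 * r ^ 2 + 2 * r + 1) / (2 * r * (r + 1) ^ 2)) * (2 * m / (G.maxDegree : ℝ))
      + (G.maxDegree : ℝ) * n * (r ^ 2 * (2 * r + 1) / (2 * r * (r + 1) ^ 2)) := by
  have hS4 : ∑ i, hA.eigenvalues i ^ 4 = 2 * Z - 2 * m + 8 * Q := by
    simpa using (hA.trace_pow_eq_sum_eigenvalues_pow 4).symm.trans hQ
  have hS2 : ∑ i, hA.eigenvalues i ^ 2 = 2 * m := by
    simpa [hm] using (hA.trace_pow_eq_sum_eigenvalues_pow 2).symm.trans G.trace_adjMatrix_sq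
  calc ∑ i, |hA.eigenvalues i|
      ≤ ∑ i, ((-1 / (2 * r * (r + 1) ^ 2)) * (hA.eigenvalues i ^ 4 / (G.maxDegree : ℝ) ^ 3)
        + ((3 * r ^ 2 + 2 * r + 1) / (2 * r * (r + 1) ^ 2)) * (hA.eigenvalues i ^ 2 / G.maxDegree)
        + G.maxDegree * (r ^ 2 * (2 * r + 1) / (2 * r * (r + 1) ^ 2))) :=
      sum_le_sum fun i _ ↦
        abs_le_quartic_energy_bound (G.abs_eigenvalues_adjMatrix_le_maxDegree hA i) hr
    _ = _ := by
      rw [sum_add_distrib, sum_add_distrib, sum_const, ← mul_sum, ← mul_sum, ← sum_div,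
        ← sum_div, hS4, hS2, card_univ, Fintype.card_fin, nsmul_eq_mul]
      ring

theorem stmt_13 (n : ℕ) (G : SimpleGraph (Fin n)) [DecidableRel G.Adj]
    (hA : (G.adjMatrix ℝ).IsHermitian)
    (hΔ : 1 ≤ G.maxDegree)
    (m Z Q : ℝ)
    (hm : m = (G.edgeFinset.card : ℝ))
    (hZ : Z = ∑ i, (G.degree i : ℝ) ^ 2)
    (hQ : ((G.adjMatrix ℝ) ^ 4).trace = 2 * Z - 2 * m + 8 * Q)
    (r : ℝ) (hr : 0 < r) (hr1 : r < 1) :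
    ∑ i, |hA.eigenvalues i| ≤
      (-1 / (2 * r * (r + 1) ^ 2)) * ((2 * Z - 2 * m + 8 * Q) / (G.maxDegree : ℝ) ^ 3)
      + ((3 * r ^ 2 + 2 * r + 1) / (2 * r * (r + 1) ^ 2)) * (2 * m / (G.maxDegree : ℝ))
      + (G.maxDegree : ℝ) * n * (r ^ 2 * (2 * r + 1) / (2 * r * (r + 1) ^ 2)) :=
  stmt_13_general n G hA m Z Q hm hQ r hr
end

section
/- Let A, B, C be reals with 0 ≤ A ≤ B ≤ C and A < B < C. Define f(r) = (−1/(2r(r+1)²))A + ((3r²+2r+1)/(2r(r+1)²))B + (r²(2r+1)/(2r(r+1)²))C for r ∈ (0,1). Then f attains its minimum over (0,1) at r* = √(B−A)/√(C−B) (assuming r* ∈ (0,1)), with minimum value −(B² + B√(B−A)√(C−B) − C(A + √(B−A)√(C−B)))/(A − 2B + C). -/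
/-!
The weights of `A`, `B`, `C` in `f r` sum to one, so with `a = r*`, `B - A = (C - B) a²` gives
`f r = B + (C - B) (a² + r²(2r+1)) / (2r(r+1)²)`. The excess of this quotient over its value
`a / (a + 1)` at `r = a` factors as `(r - a)² (2r + a + 1) / (2r(r+1)²(a+1))`, which is
nonnegative for `r > 0`.
-/

open Real

lemma weighted_sum_eq_add_div (A B C r : ℝ) (hr : r ≠ 0) (hr1 : r + 1 ≠ 0) :
    (-1 / (2 * r * (r + 1) ^ 2)) * A + ((3 * r ^ 2 + 2 * r + 1) / (2 * r * (r + 1) ^ 2)) * B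
        + (r ^ 2 * (2 * r + 1) / (2 * r * (r + 1) ^ 2)) * C
      = B + ((B - A) + r ^ 2 * (2 * r + 1) * (C - B)) / (2 * r * (r + 1) ^ 2) := by
  field_simp
  ring

section Quotient

variable {a r : ℝ}

lemma quotient_sub_div_add_one (hr : 0 < r) (ha : 0 ≤ a) :
    (a ^ 2 + r ^ 2 * (2 * r + 1)) / (2 * r * (r + 1) ^ 2) - a / (a + 1)
      = (r - a) ^ 2 * (2 * r + a + 1) / (2 * r * (r + 1) ^ 2 * (a + 1)) := by
  field_simp
  ring

lemma div_add_one_le_quotient (hr : 0 < r) (ha : 0 ≤ a) :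
    a / (a + 1) ≤ (a ^ 2 + r ^ 2 * (2 * r + 1)) / (2 * r * (r + 1) ^ 2) := by
  rw [← sub_nonneg, quotient_sub_div_add_one hr ha]
  positivity

lemma quotient_self (ha : 0 < a) :
    (a ^ 2 + a ^ 2 * (2 * a + 1)) / (2 * a * (a + 1) ^ 2) = a / (a + 1) := by
  field_simp
  ring

end Quotient

theorem stmt_14_general (A B C : ℝ) (hAB : A < B) (hBC : B < C)
    (f : ℝ → ℝ)
    (hf : ∀ r, f r = (-1 / (2 * r * (r + 1) ^ 2)) * A
        + ((3 * r ^ 2 + 2 * r + 1) / (2 * r * (r + 1) ^ 2)) * B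
        + (r ^ 2 * (2 * r + 1) / (2 * r * (r + 1) ^ 2)) * C)
    (rstar : ℝ) (hrstar : rstar = Real.sqrt (B - A) / Real.sqrt (C - B))
    (hrstar1 : rstar < 1) :
    (∀ r ∈ Set.Ioo (0 : ℝ) 1, f rstar ≤ f r) ∧
    f rstar = -(B ^ 2 + B * Real.sqrt (B - A) * Real.sqrt (C - B)
        - C * (A + Real.sqrt (B - A) * Real.sqrt (C - B))) / (A - 2 * B + C) := by
  set s := √(B - A)
  set t := √(C - B)
  have hs : 0 < s := sqrt_pos.mpr (by linarith)
  have ht : 0 < t := sqrt_pos.mpr (by linarith)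
  have hs2 : s ^ 2 = B - A := sq_sqrt (by linarith)
  have ht2 : t ^ 2 = C - B := sq_sqrt (by linarith)
  have hrstar0 : 0 < rstar := hrstar ▸ div_pos hs ht
  have hBA : B - A = (C - B) * rstar ^ 2 := by
    rw [hrstar, div_pow, hs2, ht2, mul_div_cancel₀ _ (by linarith)]
  have hf_pos : ∀ r, 0 < r →
      f r = B + (C - B) * ((rstar ^ 2 + r ^ 2 * (2 * r + 1)) / (2 * r * (r + 1) ^ 2)) := by
    intro r hr
    rw [hf, weighted_sum_eq_add_div A B C r hr.ne' (by positivity), hBA]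
    ring
  have hmin : f rstar = B + (C - B) * (rstar / (rstar + 1)) := by
    rw [hf_pos rstar hrstar0, quotient_self hrstar0]
  refine ⟨fun r hr ↦ ?_, ?_⟩
  · rw [hmin, hf_pos r hr.1]
    have hCB : 0 ≤ C - B := by linarith
    gcongr B + (C - B) * ?_
    exact div_add_one_le_quotient hr.1 hrstar0.le
  · have hst : s < t := by rwa [hrstar, div_lt_one ht] at hrstar1
    have hden : A - 2 * B + C ≠ 0 := by nlinarith
    rw [hmin, eq_div_iff hden, hrstar, ← ht2, show A = B - s ^ 2 by linarith,
      show C = B + t ^ 2 by linarith]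
    field_simp
    ring

theorem stmt_14 (A B C : ℝ) (hA : 0 ≤ A) (hAB : A < B) (hBC : B < C)
    (f : ℝ → ℝ)
    (hf : ∀ r, f r = (-1 / (2 * r * (r + 1) ^ 2)) * A
        + ((3 * r ^ 2 + 2 * r + 1) / (2 * r * (r + 1) ^ 2)) * B
        + (r ^ 2 * (2 * r + 1) / (2 * r * (r + 1) ^ 2)) * C)
    (rstar : ℝ) (hrstar : rstar = Real.sqrt (B - A) / Real.sqrt (C - B))
    (hrstar1 : rstar < 1) :
    (∀ r ∈ Set.Ioo (0 : ℝ) 1, f rstar ≤ f r) ∧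
    f rstar = -(B ^ 2 + B * Real.sqrt (B - A) * Real.sqrt (C - B)
        - C * (A + Real.sqrt (B - A) * Real.sqrt (C - B))) / (A - 2 * B + C) :=
  stmt_14_general A B C hAB hBC f hf rstar hrstar hrstar1
end

section
/- Let 0 ≤ A < B < C with √(B−A)/√(C−B) ∈ (0,1). The expression m(A) = −(B² + B√(B−A)√(C−B) − C(A + √(B−A)√(C−B)))/(A − 2B + C) is (weakly) decreasing as a function of A on the region where these constraints hold. -/
/-!
With `s = √(C - B)` and `t = √(B - A)` we have `A = B - t²`, `C = B + s²`, and the denominator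
`A - 2B + C = (s - t)(s + t)` divides the numerator, leaving `m(A) = B + s² t / (s + t)`.
This is increasing in `t ≥ 0`, and `t` decreases as `A` grows.
-/

open Real

lemma neg_div_eq_add_mul_sqrt_div {A B C : ℝ} (hAB : A ≤ B) (hBC : B ≤ C)
    (hne : √(B - A) ≠ √(C - B)) :
    -(B ^ 2 + B * √(B - A) * √(C - B) - C * (A + √(B - A) * √(C - B))) / (A - 2 * B + C)
      = B + (C - B) * √(B - A) / (√(C - B) + √(B - A)) := by
  set t := √(B - A) with ht
  set s := √(C - B) with hs
  have hA : A = B - t ^ 2 := by rw [ht, sq_sqrt (sub_nonneg.2 hAB)]; ring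
  have hC : C = B + s ^ 2 := by rw [hs, sq_sqrt (sub_nonneg.2 hBC)]; ring
  have hsub : s - t ≠ 0 := sub_ne_zero.2 hne.symm
  have hadd : s + t ≠ 0 := by
    have : 0 ≤ s := sqrt_nonneg _
    have : 0 ≤ t := sqrt_nonneg _
    intro h
    exact hne (by linarith)
  have hden : A - 2 * B + C = (s - t) * (s + t) := by rw [hA, hC]; ring
  rw [hden, hC, hA]
  field_simp
  ring

lemma mul_div_add_le_mul_div_add {a s t₁ t₂ : ℝ} (ha : 0 ≤ a) (hs : 0 < s) (ht₂ : 0 ≤ t₂)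
    (ht : t₂ ≤ t₁) : a * t₂ / (s + t₂) ≤ a * t₁ / (s + t₁) := by
  rw [div_le_div_iff₀ (by linarith) (by linarith)]
  nlinarith [mul_le_mul_of_nonneg_left ht (mul_nonneg ha hs.le)]

theorem stmt_15 (B C : ℝ)
    (m : ℝ → ℝ)
    (hm : ∀ A, m A = -(B ^ 2 + B * Real.sqrt (B - A) * Real.sqrt (C - B)
        - C * (A + Real.sqrt (B - A) * Real.sqrt (C - B))) / (A - 2 * B + C)) :
    ∀ A₁ A₂ : ℝ, 0 ≤ A₁ → A₁ ≤ A₂ → A₂ < B → B < C →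
      Real.sqrt (B - A₁) / Real.sqrt (C - B) < 1 →
      Real.sqrt (B - A₂) / Real.sqrt (C - B) < 1 →
      m A₂ ≤ m A₁ := by
  intro A₁ A₂ _ h12 h2B hBC h1 h2
  have hs : 0 < √(C - B) := sqrt_pos.2 (sub_pos.2 hBC)
  rw [div_lt_one hs] at h1 h2
  rw [hm, hm, neg_div_eq_add_mul_sqrt_div (by linarith) hBC.le h1.ne,
    neg_div_eq_add_mul_sqrt_div h2B.le hBC.le h2.ne]
  gcongr B + ?_
  exact mul_div_add_le_mul_div_add (sub_nonneg.2 hBC.le) hs (sqrt_nonneg _)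
    (sqrt_le_sqrt (by linarith))
end

section
/- Let G be a connected simple graph with maximum degree Δ, and set A' = trace(A⁴)/Δ³, B = trace(A²)/Δ, C = Δn, with A' < B < C. Then the energy satisfies E(G) ≤ −(B² + B√(B−A')√(C−B) − C(A' + √(B−A')√(C−B)))/(A' − 2B + C). -/
open Matrix

lemma my_conj_pow {n : ℕ} (U D V : Matrix (Fin n) (Fin n) ℝ) (hVU : V * U = 1)
    (hUV : U * V = 1) (k : ℕ) : (U * D * V) ^ k = U * D ^ k * V := by
  induction k with
  | zero => rw [pow_zero, pow_zero, Matrix.mul_one, hUV]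
  | succ m ih =>
    rw [pow_succ, ih, pow_succ]
    calc U * D ^ m * V * (U * D * V) = U * D ^ m * (V * U) * (D * V) := by noncomm_ring
    _ = U * (D ^ m * D) * V := by rw [hVU, Matrix.mul_one]; noncomm_ring

lemma my_trace_pow {n : ℕ} (A : Matrix (Fin n) (Fin n) ℝ) (hA : A.IsHermitian) (k : ℕ) :
    (A ^ k).trace = ∑ i, hA.eigenvalues i ^ k := by
  have hU := (Matrix.mem_unitaryGroup_iff).mp (hA.eigenvectorUnitary).2
  have hU' := (Matrix.mem_unitaryGroup_iff').mp (hA.eigenvectorUnitary).2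
  have key : A ^ k = (hA.eigenvectorUnitary : Matrix (Fin n) (Fin n) ℝ) *
      (Matrix.diagonal (RCLike.ofReal ∘ hA.eigenvalues)) ^ k *
      (star (hA.eigenvectorUnitary : Matrix (Fin n) (Fin n) ℝ)) := by
    conv_lhs => rw [hA.spectral_theorem]
    exact my_conj_pow _ _ _ hU' hU k
  rw [key, Matrix.trace_mul_cycle, hU', Matrix.one_mul,
    Matrix.diagonal_pow, Matrix.trace_diagonal]
  simp [Pi.pow_apply]

lemma my_eig_bound {n : ℕ} (hn : 2 ≤ n) (G : SimpleGraph (Fin n)) [DecidableRel G.Adj]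
    (hA : (G.adjMatrix ℝ).IsHermitian) (i : Fin n) :
    |hA.eigenvalues i| ≤ (G.maxDegree : ℝ) := by
  have : NeZero n := ⟨by omega⟩
  set v : Fin n → ℝ := ⇑(hA.eigenvectorBasis i) with hv
  have hev : G.adjMatrix ℝ *ᵥ v = hA.eigenvalues i • v := hA.mulVec_eigenvectorBasis i
  have hvne : v ≠ 0 := by
    have := hA.eigenvectorBasis.orthonormal.ne_zero i
    intro h
    apply this
    ext j
    exact congrFun h j
  obtain ⟨j, -, hj⟩ := Finset.exists_max_image (Finset.univ : Finset (Fin n))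
    (fun j => |v j|) ⟨⟨0, by omega⟩, Finset.mem_univ _⟩
  have hvj : 0 < |v j| := by
    obtain ⟨k, hk⟩ := Function.ne_iff.mp hvne
    exact lt_of_lt_of_le (abs_pos.mpr hk) (hj k (Finset.mem_univ k))
  have key : |hA.eigenvalues i| * |v j| ≤ (G.maxDegree : ℝ) * |v j| := by
    have h1 : |hA.eigenvalues i| * |v j| = |(G.adjMatrix ℝ *ᵥ v) j| := by
      rw [hev]; simp [abs_mul]
    rw [h1, SimpleGraph.adjMatrix_mulVec_apply]
    calc |∑ u ∈ G.neighborFinset j, v u| ≤ ∑ u ∈ G.neighborFinset j, |v u| :=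
          Finset.abs_sum_le_sum_abs _ _
    _ ≤ ∑ u ∈ G.neighborFinset j, |v j| :=
          Finset.sum_le_sum (fun u _ => hj u (Finset.mem_univ u))
    _ = (G.degree j : ℝ) * |v j| := by
          rw [Finset.sum_const, SimpleGraph.card_neighborFinset_eq_degree, nsmul_eq_mul]
    _ ≤ (G.maxDegree : ℝ) * |v j| := by
          have := G.degree_le_maxDegree j
          exact mul_le_mul_of_nonneg_right (by exact_mod_cast this) (abs_nonneg _)
  exact le_of_mul_le_mul_right key hvj

lemma my_cheb {n : ℕ} (b f g : Fin n → ℝ) (hb : ∀ i, 0 ≤ b i)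
    (hfg : ∀ i j, 0 ≤ (f i - f j) * (g i - g j)) :
    (∑ i, b i * f i) * (∑ i, b i * g i) ≤ (∑ i, b i) * (∑ i, b i * (f i * g i)) := by
  have key : 0 ≤ ∑ i, ∑ j, b i * b j * ((f i - f j) * (g i - g j)) := by
    apply Finset.sum_nonneg; intro i _
    apply Finset.sum_nonneg; intro j _
    exact mul_nonneg (mul_nonneg (hb i) (hb j)) (hfg i j)
  set P : Fin n → Fin n → ℝ :=
    fun i j => (b i * (f i * g i)) * b j - (b i * f i) * (b j * g j) with hP
  have e1 : ∀ (p q : Fin n → ℝ), (∑ i, p i) * (∑ j, q j) = ∑ i, ∑ j, p i * q j := by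
    intro p q; rw [Finset.sum_mul_sum]
  have step1 : ∑ i, ∑ j, b i * b j * ((f i - f j) * (g i - g j)) =
      ∑ i, ∑ j, (P i j + P j i) :=
    Finset.sum_congr rfl (fun i _ => Finset.sum_congr rfl (fun j _ => by simp only [hP]; ring))
  have step2 : ∑ (i : Fin n), ∑ (j : Fin n), (P i j + P j i) =
      (∑ i, ∑ j, P i j) + ∑ i, ∑ j, P j i := by
    simp [Finset.sum_add_distrib]
  have step3 : ∑ (i : Fin n), ∑ (j : Fin n), P j i = ∑ i, ∑ j, P i j := by
    exact Finset.sum_comm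
  have step4 : ∑ (i : Fin n), ∑ (j : Fin n), P i j =
      (∑ i, b i * (f i * g i)) * (∑ i, b i) - (∑ i, b i * f i) * (∑ i, b i * g i) := by
    simp only [hP, Finset.sum_sub_distrib]
    rw [← e1, ← e1]
  nlinarith [key, step1, step2, step3, step4]



set_option maxHeartbeats 2000000 in
lemma my_main {n : ℕ} (a : Fin n → ℝ) (Δ A' B C : ℝ) (hΔ : 0 < Δ)
    (ha0 : ∀ i, 0 ≤ a i) (haΔ : ∀ i, a i ≤ Δ)
    (hsum2 : ∑ i, a i ^ 2 = Δ * B)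
    (hsum4 : ∑ i, a i ^ 4 = Δ ^ 3 * A')
    (hC : C = Δ * n)
    (hAB : A' < B) (hBC : B < C) :
    ∑ i, a i ≤
      -(B ^ 2 + B * Real.sqrt (B - A') * Real.sqrt (C - B)
        - C * (A' + Real.sqrt (B - A') * Real.sqrt (C - B))) / (A' - 2 * B + C) := by
  obtain ⟨E, hE⟩ : ∃ E, ∑ i, a i = E := ⟨_, rfl⟩
  obtain ⟨x, hx⟩ : ∃ x, B - A' = x := ⟨_, rfl⟩
  obtain ⟨y, hy⟩ : ∃ y, C - B = y := ⟨_, rfl⟩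
  rw [hE, hx, hy]
  obtain ⟨sx, hsx⟩ : ∃ s, Real.sqrt x = s := ⟨_, rfl⟩
  obtain ⟨sy, hsy⟩ : ∃ s, Real.sqrt y = s := ⟨_, rfl⟩
  rw [hsx, hsy]
  have hcard : ∑ (_ : Fin n), (1 : ℝ) = (n : ℝ) := by simp
  -- sum identities
  have i1 : ∑ i, (Δ - a i) = C - E := by
    rw [Finset.sum_sub_distrib, hE, Finset.sum_const, Finset.card_univ, Fintype.card_fin,
      nsmul_eq_mul, hC]; ring
  have i2 : ∑ i, (a i * (Δ - a i)) = Δ * E - Δ * B := by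
    have h' : ∀ i ∈ Finset.univ, a i * (Δ - a i) = Δ * a i - a i ^ 2 := by
      intro i _; ring
    rw [Finset.sum_congr rfl h', Finset.sum_sub_distrib, ← Finset.mul_sum, hsum2, hE]
  have i3 : ∑ i, ((Δ - a i) * (Δ + a i)) = Δ * y := by
    have h' : ∀ i ∈ Finset.univ, (Δ - a i) * (Δ + a i) = Δ ^ 2 * 1 - a i ^ 2 := by
      intro i _; ring
    rw [Finset.sum_congr rfl h', Finset.sum_sub_distrib, ← Finset.mul_sum, hcard, hsum2,
      ← hy, hC]
    ring
  have i4 : ∑ i, (a i ^ 2 * ((Δ - a i) * (Δ + a i))) = Δ ^ 3 * x := by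
    have h' : ∀ i ∈ Finset.univ, a i ^ 2 * ((Δ - a i) * (Δ + a i)) =
        Δ ^ 2 * a i ^ 2 - a i ^ 4 := by
      intro i _; ring
    rw [Finset.sum_congr rfl h', Finset.sum_sub_distrib, ← Finset.mul_sum, hsum2, hsum4, ← hx]
    ring
  have i5 : ∑ i, ((Δ - a i) * (Δ + a i)) ^ 2 = Δ ^ 3 * (A' - 2 * B + C) := by
    have h' : ∀ i ∈ Finset.univ, ((Δ - a i) * (Δ + a i)) ^ 2 =
        a i ^ 4 - 2 * Δ ^ 2 * a i ^ 2 + Δ ^ 4 * 1 := by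
      intro i _; ring
    rw [Finset.sum_congr rfl h']
    rw [Finset.sum_add_distrib, Finset.sum_sub_distrib, ← Finset.mul_sum, ← Finset.mul_sum,
      hcard, hsum2, hsum4, hC]
    ring
  -- denominator positive
  have hden0 : 0 ≤ A' - 2 * B + C := by
    have h5 : 0 ≤ ∑ i, ((Δ - a i) * (Δ + a i)) ^ 2 :=
      Finset.sum_nonneg (fun i _ => sq_nonneg _)
    nlinarith [pow_pos hΔ 3]
  have hden : 0 < A' - 2 * B + C := by
    rcases lt_or_eq_of_le hden0 with h | h
    · exact h
    · exfalso
      have h5 : ∑ i, ((Δ - a i) * (Δ + a i)) ^ 2 = 0 := by rw [i5, ← h]; ring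
      have hall := (Finset.sum_eq_zero_iff_of_nonneg
        (fun i (_ : i ∈ Finset.univ) => sq_nonneg ((Δ - a i) * (Δ + a i)))).mp h5
      have h3 : ∑ i, ((Δ - a i) * (Δ + a i)) = 0 :=
        Finset.sum_eq_zero (fun i _ => by
          have := hall i (Finset.mem_univ i)
          exact pow_eq_zero_iff (n := 2) (by norm_num) |>.mp this)
      rw [i3] at h3
      have hy0 : y = 0 := by
        rcases mul_eq_zero.mp h3 with h' | h'
        · exact absurd h' (ne_of_gt hΔ)
        · exact h'
      rw [← hy] at hy0; linarith
  have hxpos : 0 < x := by rw [← hx]; linarith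
  have hypos : 0 < y := by rw [← hy]; linarith
  have hxy : x < y := by rw [← hx, ← hy]; linarith
  have hsx2 : sx ^ 2 = x := by rw [← hsx]; exact Real.sq_sqrt hxpos.le
  have hsy2 : sy ^ 2 = y := by rw [← hsy]; exact Real.sq_sqrt hypos.le
  have hsx0 : 0 ≤ sx := by rw [← hsx]; exact Real.sqrt_nonneg _
  have hsy0 : 0 ≤ sy := by rw [← hsy]; exact Real.sqrt_nonneg _
  have hsxy : sx < sy := by rw [← hsx, ← hsy]; exact Real.sqrt_lt_sqrt hxpos.le hxy
  have hCE : E ≤ C := by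
    have h' : ∑ i, a i ≤ ∑ (_ : Fin n), Δ := Finset.sum_le_sum (fun i _ => haΔ i)
    rw [hE, Finset.sum_const, Finset.card_univ, Fintype.card_fin, nsmul_eq_mul] at h'
    rw [hC]; linarith
  have main : E * sx + E * sy ≤ B * sy + C * sx := by
    rcases le_or_gt E B with hEB | hEB
    · nlinarith [mul_le_mul_of_nonneg_right hEB hsy0,
        mul_le_mul_of_nonneg_right (le_trans hEB hBC.le) hsx0]
    · -- Cauchy-Schwarz
      have cs : (∑ i, (a i * (Δ - a i))) ^ 2 ≤
          (∑ i, (Δ - a i)) * (∑ i, (a i ^ 2 * (Δ - a i))) := by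
        have h := Finset.sum_mul_sq_le_sq_mul_sq Finset.univ
          (fun i => Real.sqrt (Δ - a i)) (fun i => a i * Real.sqrt (Δ - a i))
        have e1 : ∀ i ∈ Finset.univ, Real.sqrt (Δ - a i) * (a i * Real.sqrt (Δ - a i)) =
            a i * (Δ - a i) := by
          intro i _
          have h' : Real.sqrt (Δ - a i) * Real.sqrt (Δ - a i) = Δ - a i :=
            Real.mul_self_sqrt (by linarith [haΔ i])
          calc Real.sqrt (Δ - a i) * (a i * Real.sqrt (Δ - a i))
              = a i * (Real.sqrt (Δ - a i) * Real.sqrt (Δ - a i)) := by ring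
          _ = a i * (Δ - a i) := by rw [h']
        have e2 : ∀ i ∈ Finset.univ, (Real.sqrt (Δ - a i)) ^ 2 = Δ - a i := by
          intro i _; exact Real.sq_sqrt (by linarith [haΔ i])
        have e3 : ∀ i ∈ Finset.univ, (a i * Real.sqrt (Δ - a i)) ^ 2 =
            a i ^ 2 * (Δ - a i) := by
          intro i _; rw [mul_pow, Real.sq_sqrt (by linarith [haΔ i])]
        rw [Finset.sum_congr rfl e1, Finset.sum_congr rfl e2, Finset.sum_congr rfl e3] at h
        exact h
      -- Chebyshev
      have cheb : (∑ i, ((Δ - a i) * (a i ^ 2))) * (∑ i, ((Δ - a i) * (Δ + a i))) ≤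
          (∑ i, (Δ - a i)) * (∑ i, ((Δ - a i) * (a i ^ 2 * (Δ + a i)))) :=
        my_cheb (fun i => Δ - a i) (fun i => a i ^ 2) (fun i => Δ + a i)
          (fun i => by show (0:ℝ) ≤ Δ - a i; linarith [haΔ i])
          (fun i j => by show (0:ℝ) ≤ (a i ^ 2 - a j ^ 2) * ((Δ + a i) - (Δ + a j)); nlinarith [sq_nonneg (a i - a j), ha0 i, ha0 j, mul_nonneg (sq_nonneg (a i - a j)) (add_nonneg (ha0 i) (ha0 j))])
      have cheb' : (∑ i, (a i ^ 2 * (Δ - a i))) * (Δ * y) ≤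
          (C - E) * (Δ ^ 3 * x) := by
        have r1 : ∑ i, ((Δ - a i) * (a i ^ 2)) = ∑ i, (a i ^ 2 * (Δ - a i)) :=
          Finset.sum_congr rfl (fun i _ => by ring)
        have r2 : ∑ i, ((Δ - a i) * (a i ^ 2 * (Δ + a i))) =
            ∑ i, (a i ^ 2 * ((Δ - a i) * (Δ + a i))) :=
          Finset.sum_congr rfl (fun i _ => by ring)
        rw [r1, r2, i3, i4, i1] at cheb
        exact cheb
      have hP00 : 0 ≤ C - E := by linarith
      have comb : (Δ * E - Δ * B) ^ 2 * (Δ * y) ≤ (C - E) ^ 2 * (Δ ^ 3 * x) := by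
        rw [← i2]
        calc (∑ i, (a i * (Δ - a i))) ^ 2 * (Δ * y)
            ≤ ((∑ i, (Δ - a i)) * (∑ i, (a i ^ 2 * (Δ - a i)))) * (Δ * y) := by
              apply mul_le_mul_of_nonneg_right cs
              have := hypos
              positivity
        _ = (C - E) * ((∑ i, (a i ^ 2 * (Δ - a i))) * (Δ * y)) := by rw [i1]; ring
        _ ≤ (C - E) * ((C - E) * (Δ ^ 3 * x)) := by
              apply mul_le_mul_of_nonneg_left cheb' hP00
        _ = (C - E) ^ 2 * (Δ ^ 3 * x) := by ring
      have comb2 : (E - B) ^ 2 * y ≤ (C - E) ^ 2 * x := by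
        have hΔ3 : 0 < Δ ^ 3 := pow_pos hΔ 3
        have comb' : Δ ^ 3 * ((E - B) ^ 2 * y) ≤ Δ ^ 3 * ((C - E) ^ 2 * x) := by
          calc Δ ^ 3 * ((E - B) ^ 2 * y) = (Δ * E - Δ * B) ^ 2 * (Δ * y) := by ring
          _ ≤ (C - E) ^ 2 * (Δ ^ 3 * x) := comb
          _ = Δ ^ 3 * ((C - E) ^ 2 * x) := by ring
        exact le_of_mul_le_mul_left comb' hΔ3
      have sqrt_ineq : (E - B) * sy ≤ (C - E) * sx := by
        have lhs0 : 0 ≤ (E - B) * sy := mul_nonneg (by linarith) hsy0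
        have rhs0 : 0 ≤ (C - E) * sx := mul_nonneg hP00 hsx0
        have sq' : ((E - B) * sy) ^ 2 ≤ ((C - E) * sx) ^ 2 := by
          calc ((E - B) * sy) ^ 2 = (E - B) ^ 2 * sy ^ 2 := by ring
          _ = (E - B) ^ 2 * y := by rw [hsy2]
          _ ≤ (C - E) ^ 2 * x := comb2
          _ = (C - E) ^ 2 * sx ^ 2 := by rw [hsx2]
          _ = ((C - E) * sx) ^ 2 := by ring
        exact (pow_le_pow_iff_left₀ lhs0 rhs0 two_ne_zero).mp sq'
      linarith
  have hsx2' : sx ^ 2 = B - A' := by rw [hsx2, ← hx]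
  have hsy2' : sy ^ 2 = C - B := by rw [hsy2, ← hy]
  have h1 : 0 ≤ (B * sy + C * sx) - (E * sx + E * sy) := sub_nonneg.mpr main
  have h2 : 0 ≤ sy - sx := sub_nonneg.mpr hsxy.le
  rw [le_div_iff₀ hden]
  nlinarith [mul_nonneg h1 h2, hsx2', hsy2']

theorem stmt_16 (n : ℕ) (hn : 2 ≤ n) (G : SimpleGraph (Fin n)) [DecidableRel G.Adj]
    (hG : G.Connected)
    (hA : (G.adjMatrix ℝ).IsHermitian)
    (A' B C : ℝ)
    (hA' : A' = ((G.adjMatrix ℝ) ^ 4).trace / (G.maxDegree : ℝ) ^ 3)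
    (hB : B = ((G.adjMatrix ℝ) ^ 2).trace / (G.maxDegree : ℝ))
    (hC : C = (G.maxDegree : ℝ) * n)
    (hAB : A' < B) (hBC : B < C) :
    ∑ i, |hA.eigenvalues i| ≤
      -(B ^ 2 + B * Real.sqrt (B - A') * Real.sqrt (C - B)
        - C * (A' + Real.sqrt (B - A') * Real.sqrt (C - B))) / (A' - 2 * B + C) := by
  have hΔ1 : 1 ≤ G.maxDegree := by
    obtain ⟨w⟩ := hG.preconnected ⟨0, by omega⟩ ⟨1, by omega⟩
    cases w with
    | cons h p =>
      have hd : 0 < G.degree ⟨0, by omega⟩ := by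
        rw [G.degree_pos_iff_exists_adj]
        exact ⟨_, h⟩
      exact le_trans hd (G.degree_le_maxDegree _)
  have hΔ : (0 : ℝ) < (G.maxDegree : ℝ) := by
    have h0 : 0 < G.maxDegree := hΔ1
    exact_mod_cast h0
  have t2 : ∑ i, |hA.eigenvalues i| ^ 2 = (G.maxDegree : ℝ) * B := by
    rw [Finset.sum_congr rfl (fun i (_ : i ∈ Finset.univ) => sq_abs (hA.eigenvalues i)),
      hB, ← my_trace_pow _ hA 2]
    field_simp
  have t4 : ∑ i, |hA.eigenvalues i| ^ 4 = (G.maxDegree : ℝ) ^ 3 * A' := by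
    have e : ∀ i ∈ Finset.univ, |hA.eigenvalues i| ^ 4 = hA.eigenvalues i ^ 4 := by
      intro i _
      rw [pow_abs, abs_of_nonneg (by positivity)]
    rw [Finset.sum_congr rfl e, hA', ← my_trace_pow _ hA 4]
    field_simp
  exact my_main (fun i => |hA.eigenvalues i|) (G.maxDegree : ℝ) A' B C hΔ
    (fun i => abs_nonneg _) (fun i => my_eig_bound hn G hA i) t2 t4 hC hAB hBC
end

section
/- Let G be a d-regular simple graph on n vertices with d ≥ 1. Then the energy of G satisfies E(G) ≤ n·(d + (d² − d)√(d−1))/(d² − d + 1). -/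
/-!
Moment method. The adjacency eigenvalues `λᵢ` of a `d`-regular graph satisfy `|λᵢ| ≤ d`,
`∑ λᵢ² = tr A² = n d` and `∑ λᵢ⁴ = tr A⁴ ≥ n d (2d - 1)`, since row `v` of `A²` has diagonal entry
`d`, nonnegative integer entries and row sum `d²`. An even quartic `p t = a + c t² + e t⁴` with
`e ≤ 0` and `|t| ≤ p t` on `[-d, d]` therefore gives `E(G) ≤ n a + c n d + e n d (2d - 1)`.
For `d ≥ 2` take `s = √(d - 1)` and the quartic touching `|t|` at `t = ±s` and meeting it at
`t = ±d = ±(s² + 1)`; for `d = 1` the quadratic `(1 + t²) / 2` suffices.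
-/

open Matrix Finset

theorem Matrix.IsHermitian.trace_pow_eq_sum_eigenvalues_pow_s17 {𝕜 n : Type*} [RCLike 𝕜] [Fintype n]
    [DecidableEq n] {A : Matrix n n 𝕜} (hA : A.IsHermitian) (k : ℕ) :
    (A ^ k).trace = ∑ i, (hA.eigenvalues i : 𝕜) ^ k := by
  conv_lhs => rw [hA.spectral_theorem, ← map_pow, Unitary.conjStarAlgAut_apply, trace_mul_cycle,
    Unitary.coe_star_mul_self, one_mul, diagonal_pow, trace_diagonal]
  rfl

namespace SimpleGraph.IsRegularOfDegree

variable {V : Type*} [Fintype V] {G : SimpleGraph V} [DecidableRel G.Adj] {d : ℕ}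

theorem sum_adjMatrix_apply {α : Type*} [NonAssocSemiring α] (hreg : G.IsRegularOfDegree d)
    (v : V) : ∑ w, G.adjMatrix α v w = d := by
  simpa [mulVec, dotProduct] using
    adjMatrix_mulVec_const_apply_of_regular (α := α) (a := 1) hreg (v := v)

variable [DecidableEq V]

theorem adjMatrix_sq_apply_self {α : Type*} [Semiring α] (hreg : G.IsRegularOfDegree d) (v : V) :
    (G.adjMatrix α ^ 2) v v = d := by
  rw [sq, adjMatrix_mul_self_apply_self, hreg v]

theorem trace_adjMatrix_sq {α : Type*} [Semiring α] (hreg : G.IsRegularOfDegree d) :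
    (G.adjMatrix α ^ 2).trace = Fintype.card V * d := by
  simp [trace, hreg.adjMatrix_sq_apply_self]

theorem sum_adjMatrix_sq_apply {α : Type*} [Semiring α] (hreg : G.IsRegularOfDegree d) (v : V) :
    ∑ w, (G.adjMatrix α ^ 2) v w = d * d := by
  simp_rw [sq, mul_apply]
  rw [sum_comm]
  simp_rw [← mul_sum, hreg.sum_adjMatrix_apply, ← sum_mul, hreg.sum_adjMatrix_apply]

theorem le_sum_adjMatrix_sq_apply_sq (hreg : G.IsRegularOfDegree d) (v : V) :
    d * (2 * d - 1) ≤ ∑ w, (G.adjMatrix ℝ ^ 2) v w ^ 2 := by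
  -- Entries `x` of `A ^ 2` count walks, so `x (x - 1) ≥ 0`; the diagonal one gives `d (d - 1)`.
  have hnat : ∀ w, 0 ≤ (G.adjMatrix ℝ ^ 2) v w * ((G.adjMatrix ℝ ^ 2) v w - 1) := fun w => by
    rw [adjMatrix_pow_apply_eq_card_walk]
    rcases Fintype.card _ with _ | x <;> simp; positivity
  have := single_le_sum (fun w _ => hnat w) (mem_univ v)
  simp only [mul_sub, mul_one, sum_sub_distrib, hreg.adjMatrix_sq_apply_self,
    hreg.sum_adjMatrix_sq_apply, ← sq] at this
  linarith

theorem le_trace_adjMatrix_pow_four (hreg : G.IsRegularOfDegree d) :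
    Fintype.card V * d * (2 * d - 1) ≤ (G.adjMatrix ℝ ^ 4).trace := by
  have hsymm := (isSymm_adjMatrix G (α := ℝ)).pow 2
  calc Fintype.card V * d * (2 * d - 1) = ∑ v : V, (d : ℝ) * (2 * d - 1) := by
        simp [mul_assoc]
    _ ≤ ∑ v, ∑ w, (G.adjMatrix ℝ ^ 2) v w ^ 2 :=
        sum_le_sum fun v _ => hreg.le_sum_adjMatrix_sq_apply_sq v
    _ = (G.adjMatrix ℝ ^ 2 * G.adjMatrix ℝ ^ 2).trace := by
        refine sum_congr rfl fun v _ => ?_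
        rw [Matrix.diag_apply, mul_apply]
        exact sum_congr rfl fun w _ => by rw [sq, hsymm.apply w v]
    _ = (G.adjMatrix ℝ ^ 4).trace := by rw [← pow_add]

theorem abs_eigenvalues_le (hreg : G.IsRegularOfDegree d) (hA : (G.adjMatrix ℝ).IsHermitian)
    (i : V) : |hA.eigenvalues i| ≤ d := by
  have hev : Module.End.HasEigenvalue (toLin' (G.adjMatrix ℝ)) (hA.eigenvalues i) := by
    rw [Module.End.hasEigenvalue_iff_mem_spectrum, Matrix.spectrum_toLin']
    exact hA.eigenvalues_mem_spectrum_real i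
  obtain ⟨v, hv⟩ := eigenvalue_mem_ball hev
  rw [Metric.mem_closedBall, Real.dist_eq] at hv
  have hoff : ∑ w ∈ univ.erase v, ‖G.adjMatrix ℝ v w‖ = d := by
    rw [← hreg.sum_adjMatrix_apply v, ← sum_erase_add _ _ (mem_univ v), adjMatrix_apply,
      if_neg G.irrefl, add_zero]
    exact sum_congr rfl fun w _ => by rw [adjMatrix_apply]; split_ifs <;> simp
  rwa [hoff, adjMatrix_apply, if_neg G.irrefl, sub_zero] at hv

end SimpleGraph.IsRegularOfDegree

theorem sum_abs_le_of_abs_le_quartic {ι : Type*} [Fintype ι] {x : ι → ℝ} {D a c e m₄ : ℝ}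
    (he : e ≤ 0) (hquartic : ∀ t, |t| ≤ D → |t| ≤ a + c * t ^ 2 + e * t ^ 4)
    (hx : ∀ i, |x i| ≤ D) (h₄ : m₄ ≤ ∑ i, x i ^ 4) :
    ∑ i, |x i| ≤ Fintype.card ι * a + c * ∑ i, x i ^ 2 + e * m₄ :=
  calc ∑ i, |x i| ≤ ∑ i, (a + c * x i ^ 2 + e * x i ^ 4) :=
        sum_le_sum fun i _ => hquartic _ (hx i)
    _ = Fintype.card ι * a + c * ∑ i, x i ^ 2 + e * ∑ i, x i ^ 4 := by
        simp only [sum_add_distrib, ← mul_sum, sum_const, card_univ, nsmul_eq_mul]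
    _ ≤ Fintype.card ι * a + c * ∑ i, x i ^ 2 + e * m₄ := by
        linarith [mul_le_mul_of_nonpos_left h₄ he]

namespace VanDam

noncomputable def coeff₀ (s : ℝ) : ℝ :=
  s * (s ^ 2 + 1) * (s + 1) ^ 2 / (2 * (s ^ 2 + s + 1) ^ 2)

noncomputable def coeff₂ (s : ℝ) : ℝ := 1 / (2 * s) + s / (s ^ 2 + s + 1) ^ 2

noncomputable def coeff₄ (s : ℝ) : ℝ := -1 / (2 * s * (s ^ 2 + s + 1) ^ 2)

theorem coeff₄_nonpos {s : ℝ} (hs : 0 < s) : coeff₄ s ≤ 0 :=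
  div_nonpos_of_nonpos_of_nonneg (by norm_num) (by positivity)

theorem abs_le_quartic {s t : ℝ} (hs : 0 < s) (ht : |t| ≤ s ^ 2 + 1) :
    |t| ≤ coeff₀ s + coeff₂ s * t ^ 2 + coeff₄ s * t ^ 4 := by
  have factor : coeff₀ s + coeff₂ s * |t| ^ 2 + coeff₄ s * |t| ^ 4 - |t| =
      (|t| - s) ^ 2 * (s ^ 2 + 1 - |t|) * (|t| + (s + 1) ^ 2) /
        (2 * s * (s ^ 2 + s + 1) ^ 2) := by
    unfold coeff₀ coeff₂ coeff₄
    field_simp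
    ring
  have hnonneg : 0 ≤ (|t| - s) ^ 2 * (s ^ 2 + 1 - |t|) * (|t| + (s + 1) ^ 2) /
      (2 * s * (s ^ 2 + s + 1) ^ 2) := by
    have := abs_nonneg t
    apply div_nonneg _ (by positivity)
    apply mul_nonneg (mul_nonneg (sq_nonneg _) (by linarith)) (by positivity)
  have h4 : |t| ^ 4 = t ^ 4 := by rw [show 4 = 2 * 2 from rfl, pow_mul, sq_abs, ← pow_mul]
  rw [sq_abs, h4] at factor
  linarith

theorem coeff_moment_eq {s : ℝ} (hs : 0 < s) :
    coeff₀ s + coeff₂ s * (s ^ 2 + 1) + coeff₄ s * ((s ^ 2 + 1) * (2 * (s ^ 2 + 1) - 1)) =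
      ((s ^ 2 + 1) + ((s ^ 2 + 1) ^ 2 - (s ^ 2 + 1)) * s) /
        ((s ^ 2 + 1) ^ 2 - (s ^ 2 + 1) + 1) := by
  have : (s ^ 2 + 1) ^ 2 - (s ^ 2 + 1) + 1 ≠ 0 := by nlinarith
  rw [eq_div_iff this]
  unfold coeff₀ coeff₂ coeff₄
  field_simp
  ring

end VanDam

theorem stmt_17 (n d : ℕ) (hd : 1 ≤ d) (G : SimpleGraph (Fin n)) [DecidableRel G.Adj]
    (hreg : G.IsRegularOfDegree d)
    (hA : (G.adjMatrix ℝ).IsHermitian) :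
    ∑ i, |hA.eigenvalues i| ≤
      (n : ℝ) * ((d : ℝ) + ((d : ℝ) ^ 2 - d) * Real.sqrt ((d : ℝ) - 1)) /
        ((d : ℝ) ^ 2 - d + 1) := by
  have htrace (k : ℕ) : (G.adjMatrix ℝ ^ k).trace = ∑ i, hA.eigenvalues i ^ k := by
    simpa using hA.trace_pow_eq_sum_eigenvalues_pow_s17 k
  have h₂ : ∑ i, hA.eigenvalues i ^ 2 = n * d := by
    rw [← htrace, hreg.trace_adjMatrix_sq, Fintype.card_fin]
  have h₄ : n * d * (2 * d - 1) ≤ ∑ i, hA.eigenvalues i ^ 4 := by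
    simpa [htrace] using hreg.le_trace_adjMatrix_pow_four
  obtain rfl | hd := hd.eq_or_lt
  · have := sum_abs_le_of_abs_le_quartic (a := 1 / 2) (c := 1 / 2) le_rfl
      (fun t _ => by nlinarith [sq_nonneg (|t| - 1), sq_abs t]) (hreg.abs_eigenvalues_le hA) h₄
    simp only [h₂, Fintype.card_fin] at this
    norm_num
    linarith
  · set s := √((d : ℝ) - 1)
    have hs : 0 < s := Real.sqrt_pos.2 (by norm_num; exact_mod_cast hd)
    have hds : (d : ℝ) = s ^ 2 + 1 := by rw [Real.sq_sqrt] <;> norm_num; exact_mod_cast hd.le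
    have := sum_abs_le_of_abs_le_quartic (VanDam.coeff₄_nonpos hs)
      (fun t ht => VanDam.abs_le_quartic hs (hds ▸ ht)) (hreg.abs_eigenvalues_le hA) h₄
    rw [h₂, Fintype.card_fin] at this
    refine this.trans_eq ?_
    rw [hds]
    linear_combination n * VanDam.coeff_moment_eq hs
end
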